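/- arXiv:1804.06036 — 3 statements merged into one kernel-verified Lean document; each statement's English description precedes it below -/
import Mathlib

section
/- Let G be a loopless multigraph with maximum degree at most 3 that is not incidence 6-choosable, and suppose that every loopless multigraph with maximum degree at most 3 having fewer vertices than G is incidence 6-choosable. Then G is cubic (every vertex has degree exactly 3) and G has no multiple edges (it is a simple graph). -/
/-- A loopless multigraph: a vertex type `V`, an edge type `E`, and a map assigning to each
edge its pair of (distinct) endpoints. -/
structure Multigraph (V E : Type*) where
  ends : E → Sym2 V
  loopless : ∀ e, ¬ (ends e).IsDiag

namespace Multigraph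

variable {V E : Type*}

/-- The degree of a vertex: the number of edges incident with it. -/
noncomputable def degree (G : Multigraph V E) (v : V) : ℕ := {e : E | v ∈ G.ends e}.ncard

/-- `(v, e)` is an incidence of `G` when `v` is an endpoint of `e`. -/
def IsInc (G : Multigraph V E) (v : V) (e : E) : Prop := v ∈ G.ends e

/-- Two incidences `(v, e)` and `(w, f)` are adjacent if `v = w`, or `e = f`, or the edge `e`
joins `v` and `w`, or the edge `f` joins `v` and `w`. -/
def IncAdj (G : Multigraph V E) (v : V) (e : E) (w : V) (f : E) : Prop :=
  v = w ∨ e = f ∨ G.ends e = s(v, w) ∨ G.ends f = s(v, w)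

/-- `φ` is an incidence coloring of `G` choosing colors from the list assignment `L`. -/
def IsIncListColoring (G : Multigraph V E) (L : V × E → Finset ℕ) (φ : V × E → ℕ) : Prop :=
  (∀ v e, G.IsInc v e → φ (v, e) ∈ L (v, e)) ∧
  (∀ v e w f, G.IsInc v e → G.IsInc w f → (v, e) ≠ (w, f) → G.IncAdj v e w f →
    φ (v, e) ≠ φ (w, f))

/-- `G` is incidence `k`-choosable: for every assignment of lists of `k` colors to the
incidences of `G` there is an incidence coloring choosing colors from the lists. -/
def IncChoosable (G : Multigraph V E) (k : ℕ) : Prop :=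
  ∀ L : V × E → Finset ℕ, (∀ v e, G.IsInc v e → (L (v, e)).card = k) →
    ∃ φ, G.IsIncListColoring L φ

/-- The incidence choice number of `G`: the least `k` such that `G` is incidence
`k`-choosable. -/
noncomputable def incChoiceNumber (G : Multigraph V E) : ℕ := sInf {k | G.IncChoosable k}

end Multigraph

/-!
Delete a small vertex set `W` from a minimal counterexample: a vertex of degree at most 2, or both
ends of a multiple edge. What remains is a smaller subcubic multigraph, hence incidence
6-choosable, which colours every incidence whose edge avoids `W`; the remaining incidences are
coloured greedily. Since incidences `(v, e)` and `(w, f)` are adjacent exactly when `v ∈ f` or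
`w ∈ e`, an incidence `(x, t)` with `x ∉ W` and the other end of `t` in `W` has at most four
coloured neighbours, and one with `x ∈ W` has fewer than `deg z` of them, `z` being the other end
of `t`.

This suffices for a vertex of degree at most 2 and for a triple edge. For a double edge `e, f`
between `u` and `v`, with third edges `g = uw` and `h = vy`, the incidence `(u, e)` is left with
six coloured neighbours. So `(u, g)` and `(v, h)`, which have at least three admissible colours
each, are coloured first in such a way that together with `(w, g)` they use at most two colours
of the list of `(u, e)`; otherwise their admissible colours would be disjoint and would avoid the
colour of `(w, g)` inside that list, which would then have at least seven colours.
-/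

theorem Set.ncard_pair_le {α : Type*} (a b : α) : ({a, b} : Set α).ncard ≤ 2 :=
  (Set.ncard_insert_le a {b}).trans (by rw [Set.ncard_singleton])

theorem Set.exists_ncard_inter_le_two {α : Type*} {A B L : Set α} (hL : L.Finite) (c : α)
    (hA : A.Nonempty) (hB : B.Nonempty) (h : L.ncard ≤ A.ncard + B.ncard) :
    ∃ a ∈ A, ∃ b ∈ B, (L ∩ {c, a, b}).ncard ≤ 2 := by
  obtain ⟨a₀, ha₀⟩ := hA
  obtain ⟨b₀, hb₀⟩ := hB
  have le_two {a b x y : α} (hsub : L ∩ {c, a, b} ⊆ {x, y}) : (L ∩ {c, a, b}).ncard ≤ 2 :=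
    (Set.ncard_le_ncard hsub).trans (Set.ncard_pair_le x y)
  by_contra! hcon
  have hc : c ∈ L := by
    by_contra hc
    refine (hcon a₀ ha₀ b₀ hb₀).not_ge (le_two (x := a₀) (y := b₀) ?_)
    rintro x ⟨hxL, rfl | rfl | rfl⟩ <;> simp_all
  have hA : A ⊆ L \ {c} := fun a ha => by
    by_contra hac
    refine (hcon a ha b₀ hb₀).not_ge (le_two (x := c) (y := b₀) ?_)
    rintro x ⟨hxL, rfl | rfl | rfl⟩ <;> simp_all
  have hB : B ⊆ L \ {c} := fun b hb => by
    by_contra hbc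
    refine (hcon a₀ ha₀ b hb).not_ge (le_two (x := c) (y := a₀) ?_)
    rintro x ⟨hxL, rfl | rfl | rfl⟩ <;> simp_all
  have hAB : Disjoint A B := Set.disjoint_left.2 fun a ha hb => by
    refine (hcon a ha a hb).not_ge (le_two (x := c) (y := a) ?_)
    rintro x ⟨hxL, rfl | rfl | rfl⟩ <;> simp_all
  have := Set.ncard_le_ncard (Set.union_subset hA hB) hL.sdiff
  rw [Set.ncard_union_eq hAB (hL.subset (hA.trans Set.sdiff_subset))
    (hL.subset (hB.trans Set.sdiff_subset)), Set.ncard_sdiff_singleton_of_mem hc] at this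
  have := (Set.ncard_pos hL).2 ⟨c, hc⟩
  omega

namespace Multigraph

variable {V E : Type*} (G : Multigraph V E)

def edgesAt (x : V) : Set E := {e | x ∈ G.ends e}

def incidencesAt (x : V) : Set (V × E) := {p | p.1 = x ∧ x ∈ G.ends p.2}

def incidencesOn (A : Set E) : Set (V × E) := {p | p.2 ∈ A ∧ p.1 ∈ G.ends p.2}

def incidencesAvoiding (W : Set V) : Set (V × E) :=
  {p | p.1 ∈ G.ends p.2 ∧ ∀ x ∈ W, x ∉ G.ends p.2}

def incNbrs (S : Set (V × E)) (q : V × E) : Set (V × E) :=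
  {p ∈ S | p ≠ q ∧ G.IncAdj q.1 q.2 p.1 p.2}

def IsIncListColoringOn (L : V × E → Finset ℕ) (S : Set (V × E)) (φ : V × E → ℕ) : Prop :=
  (∀ p ∈ S, φ p ∈ L p) ∧
    ∀ p ∈ S, ∀ q ∈ S, p ≠ q → G.IncAdj p.1 p.2 q.1 q.2 → φ p ≠ φ q

def deleteVerts (W : Set V) : Multigraph (Wᶜ : Set V) {e : E // ∀ x ∈ W, x ∉ G.ends e} where
  ends e := (G.ends e.1).attachWith fun x hx hxW => e.2 x hxW hx
  loopless e h := G.loopless e.1 (by simpa using h.map (f := Subtype.val))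

variable {G}

theorem exists_ends_eq_of_mem {x : V} {e : E} (hx : x ∈ G.ends e) : ∃ z, G.ends e = s(x, z) :=
  ⟨_, (Sym2.other_spec hx).symm⟩

theorem eq_of_mem_ends {v x y : V} {e : E} (hv : v ∈ G.ends e) (hx : x ∈ G.ends e)
    (hy : y ∈ G.ends e) (hxv : x ≠ v) (hyv : y ≠ v) : x = y := by
  rw [(Sym2.mem_and_mem_iff hxv.symm).1 ⟨hv, hx⟩, Sym2.mem_iff] at hy
  exact (hy.resolve_left hyv).symm

theorem incAdj_iff {v w : V} {e f : E} (hv : v ∈ G.ends e) (hw : w ∈ G.ends f) :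
    G.IncAdj v e w f ↔ v ∈ G.ends f ∨ w ∈ G.ends e := by
  constructor
  · rintro (rfl | rfl | h | h)
    · exact Or.inr hv
    · exact Or.inr hw
    · exact Or.inr (h ▸ Sym2.mem_mk_right v w)
    · exact Or.inl (h ▸ Sym2.mem_mk_left v w)
  · rintro (h | h) <;> by_cases hvw : v = w
    · exact Or.inl hvw
    · exact Or.inr (Or.inr (Or.inr ((Sym2.mem_and_mem_iff hvw).1 ⟨h, hw⟩)))
    · exact Or.inl hvw
    · exact Or.inr (Or.inr (Or.inl ((Sym2.mem_and_mem_iff hvw).1 ⟨hv, h⟩)))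

theorem IncAdj.symm {v w : V} {e f : E} (h : G.IncAdj v e w f) : G.IncAdj w f v e := by
  rcases h with h | h | h | h
  · exact Or.inl h.symm
  · exact Or.inr (Or.inl h.symm)
  · exact Or.inr (Or.inr (Or.inr (h.trans Sym2.eq_swap)))
  · exact Or.inr (Or.inr (Or.inl (h.trans Sym2.eq_swap)))

theorem mem_deleteVerts_ends {W : Set V} {x : (Wᶜ : Set V)}
    {e : {e : E // ∀ x ∈ W, x ∉ G.ends e}} :
    x ∈ (G.deleteVerts W).ends e ↔ x.1 ∈ G.ends e.1 := by
  simp only [deleteVerts, Sym2.attachWith, Sym2.mem_pmap_iff]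
  exact ⟨fun ⟨_, ha, hx⟩ => hx ▸ ha, fun h => ⟨x.1, h, rfl⟩⟩

theorem degree_deleteVerts_le [Finite E] (W : Set V) (x : (Wᶜ : Set V)) :
    (G.deleteVerts W).degree x ≤ G.degree x :=
  Set.ncard_le_ncard_of_injOn Subtype.val (fun _ he => mem_deleteVerts_ends.1 he)
    Subtype.val_injective.injOn

section Coloring

variable {L : V × E → Finset ℕ} {S : Set (V × E)} {φ : V × E → ℕ}

theorem IncChoosable.exists_coloringOn_incidencesAvoiding {W : Set V} {k : ℕ}
    (h : (G.deleteVerts W).IncChoosable k) (hL : ∀ v e, G.IsInc v e → (L (v, e)).card = k) :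
    ∃ φ, G.IsIncListColoringOn L (G.incidencesAvoiding W) φ := by
  classical
  obtain ⟨φ', hφ'L, hφ'⟩ :=
    h (fun p => L (p.1.1, p.2.1)) fun _ _ hxe => hL _ _ (mem_deleteVerts_ends.1 hxe)
  let lift (p : V × E) (hp : p ∈ G.incidencesAvoiding W) :
      (Wᶜ : Set V) × {e : E // ∀ x ∈ W, x ∉ G.ends e} :=
    (⟨p.1, fun h => hp.2 _ h hp.1⟩, ⟨p.2, hp.2⟩)
  refine ⟨fun p => if hp : p ∈ G.incidencesAvoiding W then φ' (lift p hp) else 0,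
    fun p hp => ?_, fun p hp q hq hne hadj => ?_⟩
  · simpa [hp] using hφ'L _ _ (mem_deleteVerts_ends.2 hp.1)
  · simp only [hp, hq, dite_true]
    refine hφ' _ _ _ _ (mem_deleteVerts_ends.2 hp.1) (mem_deleteVerts_ends.2 hq.1)
      (fun h => hne ?_) ?_
    · simp only [Prod.mk.injEq, Subtype.mk.injEq] at h
      exact Prod.ext h.1 h.2
    · rw [incAdj_iff (mem_deleteVerts_ends.2 hp.1) (mem_deleteVerts_ends.2 hq.1)]
      simpa only [mem_deleteVerts_ends, lift] using (incAdj_iff hp.1 hq.1).1 hadj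

theorem IsIncListColoringOn.isIncListColoring (hφ : G.IsIncListColoringOn L S φ)
    (hS : ∀ v e, G.IsInc v e → (v, e) ∈ S) : G.IsIncListColoring L φ :=
  ⟨fun v e h => hφ.1 _ (hS v e h),
    fun v e w f hv hw hne hadj => hφ.2 _ (hS v e hv) _ (hS w f hw) hne hadj⟩

theorem IsIncListColoringOn.update [DecidableEq V] [DecidableEq E]
    (hφ : G.IsIncListColoringOn L S φ) {q : V × E} {c : ℕ} (hc : c ∈ L q)
    (hfree : c ∉ φ '' G.incNbrs S q) :
    G.IsIncListColoringOn L (insert q S) (Function.update φ q c) := by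
  have key : ∀ p ∈ S, p ≠ q → G.IncAdj q.1 q.2 p.1 p.2 → φ p ≠ c :=
    fun p hp hpq hadj h => hfree ⟨p, ⟨hp, hpq, hadj⟩, h⟩
  refine ⟨fun p hp => ?_, fun p hp p' hp' hne hadj => ?_⟩
  · rcases eq_or_ne p q with rfl | hpq
    · simpa using hc
    · simpa [hpq] using hφ.1 p (hp.resolve_left hpq)
  · rcases eq_or_ne p q with rfl | hpq <;> rcases eq_or_ne p' p with rfl | hp'q
    · exact absurd rfl hne
    · simpa [hne.symm] using (key p' (hp'.resolve_left hne.symm) hne.symm hadj).symm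
    · exact absurd rfl hne
    · rcases eq_or_ne p' q with rfl | hp'q'
      · simpa [hpq] using key p (hp.resolve_left hpq) hpq hadj.symm
      · simpa [hpq, hp'q'] using
          hφ.2 p (hp.resolve_left hpq) p' (hp'.resolve_left hp'q') hne hadj

theorem IsIncListColoringOn.update_update [DecidableEq V] [DecidableEq E]
    (hφ : G.IsIncListColoringOn L S φ) {q₁ q₂ : V × E} {c₁ c₂ : ℕ}
    (hq : ¬ G.IncAdj q₂.1 q₂.2 q₁.1 q₁.2) (hc₁ : c₁ ∈ L q₁) (hc₂ : c₂ ∈ L q₂)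
    (hfree₁ : c₁ ∉ φ '' G.incNbrs S q₁) (hfree₂ : c₂ ∉ φ '' G.incNbrs S q₂) :
    G.IsIncListColoringOn L (insert q₂ (insert q₁ S))
      (Function.update (Function.update φ q₁ c₁) q₂ c₂) := by
  refine (hφ.update hc₁ hfree₁).update hc₂ ?_
  rintro ⟨p, ⟨hp, hpq, hadj⟩, h⟩
  have hp₁ : p ≠ q₁ := by rintro rfl; exact hq hadj
  exact hfree₂ ⟨p, ⟨hp.resolve_left hp₁, hpq, hadj⟩, by simpa [hp₁] using h⟩

theorem IsIncListColoringOn.exists_update_update_ncard_inter_le_two [DecidableEq V]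
    [DecidableEq E] (hφ : G.IsIncListColoringOn L S φ) {q₁ q₂ : V × E}
    (hq : ¬ G.IncAdj q₂.1 q₂.2 q₁.1 q₁.2) (K : Finset ℕ) (c : ℕ)
    (h₁ : ((L q₁ : Set ℕ) \ φ '' G.incNbrs S q₁).Nonempty)
    (h₂ : ((L q₂ : Set ℕ) \ φ '' G.incNbrs S q₂).Nonempty)
    (hK : K.card ≤
      ((L q₁ : Set ℕ) \ φ '' G.incNbrs S q₁).ncard + ((L q₂ : Set ℕ) \ φ '' G.incNbrs S q₂).ncard) :
    ∃ c₁ c₂, G.IsIncListColoringOn L (insert q₂ (insert q₁ S))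
      (Function.update (Function.update φ q₁ c₁) q₂ c₂) ∧
        ((K : Set ℕ) ∩ {c, c₁, c₂}).ncard ≤ 2 := by
  obtain ⟨c₁, hc₁, c₂, hc₂, hK'⟩ :=
    Set.exists_ncard_inter_le_two K.finite_toSet c h₁ h₂ (by rwa [Set.ncard_coe_finset])
  exact ⟨c₁, c₂, hφ.update_update hq hc₁.1 hc₂.1 hc₁.2 hc₂.2, hK'⟩

theorem IsIncListColoringOn.exists_update [DecidableEq V] [DecidableEq E]
    (hφ : G.IsIncListColoringOn L S φ) {q : V × E}
    (h : (↑(L q) ∩ φ '' G.incNbrs S q).ncard < (L q).card) :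
    ∃ c, G.IsIncListColoringOn L (insert q S) (Function.update φ q c) := by
  obtain ⟨c, hc, hfree⟩ :=
    Set.exists_mem_notMem_of_ncard_lt_ncard (h.trans_eq (Set.ncard_coe_finset _).symm)
  exact ⟨c, hφ.update hc fun h' => hfree ⟨hc, h'⟩⟩

end Coloring

theorem ncard_incidencesAt (x : V) : (G.incidencesAt x).ncard = G.degree x := by
  have : G.incidencesAt x = (fun e => (x, e)) '' G.edgesAt x := by
    ext ⟨y, e⟩
    simp [incidencesAt, edgesAt, and_comm, eq_comm]
  rw [this, Set.ncard_image_of_injective _ (Prod.mk_right_injective x)]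
  rfl

theorem incNbrs_subset_incidencesAt {S : Set (V × E)} {x z : V} {t : E}
    (ht : G.ends t = s(x, z)) (hS : ∀ p ∈ S, p.1 ∈ G.ends p.2 ∧ (x ∈ G.ends p.2 → p = (z, t))) :
    G.incNbrs S (x, t) ⊆ G.incidencesAt z := by
  rintro ⟨y, r⟩ ⟨hp, -, hadj⟩
  obtain ⟨hy, hxr⟩ := hS _ hp
  by_cases hx : x ∈ G.ends r
  · rw [hxr hx]
    exact ⟨rfl, ht ▸ Sym2.mem_mk_right x z⟩
  · rcases (incAdj_iff (ht ▸ Sym2.mem_mk_left x z) hy).1 hadj with h | h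
    · exact absurd h hx
    · rw [ht, Sym2.mem_iff] at h
      obtain rfl | rfl := h
      · exact absurd hy hx
      · exact ⟨rfl, hy⟩

theorem incNbrs_incidencesAvoiding_subset {W : Set V} {x z : V} {t : E} (hx : x ∈ W)
    (ht : G.ends t = s(x, z)) :
    G.incNbrs (G.incidencesAvoiding W) (x, t) ⊆ G.incidencesAt z ∩ G.incidencesAvoiding W :=
  fun _ hp => ⟨incNbrs_subset_incidencesAt ht
    (fun _ hp => ⟨hp.1, fun h => absurd h (hp.2 x hx)⟩) hp, hp.1⟩

theorem incNbrs_incidencesAvoiding_union_subset {W : Set V} {x : V} {t : E}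
    (ht : ∀ z ∈ G.ends t, z ∈ W) (hx : x ∈ G.ends t) (N : Set (V × E)) :
    G.incNbrs (G.incidencesAvoiding W ∪ N) (x, t) ⊆ N := by
  rintro p ⟨hp | hp, hpq, hadj⟩
  · obtain ⟨z, hxz⟩ := exists_ends_eq_of_mem hx
    obtain ⟨⟨_, hzp⟩, _, hW⟩ := incNbrs_incidencesAvoiding_subset (ht x hx) hxz ⟨hp, hpq, hadj⟩
    exact absurd hzp (hW z (ht z (hxz ▸ Sym2.mem_mk_right x z)))
  · exact hp

section Finite

variable [Finite E]

theorem ncard_incidencesOn_le (A : Set E) : (G.incidencesOn A).ncard ≤ 2 * A.ncard := by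
  classical
  let f : V × E → E × Bool := fun p => (p.2, decide (p.1 = (G.ends p.2).out.1))
  have hinj : Set.InjOn f (G.incidencesOn A) := by
    rintro ⟨x, e⟩ ⟨-, hx⟩ ⟨y, e'⟩ ⟨-, hy⟩ h
    simp only [f, Prod.mk.injEq, decide_eq_decide] at h
    obtain ⟨rfl, hxy⟩ := h
    by_cases hx' : x = (G.ends e).out.1
    · rw [hx', hxy.1 hx']
    · rw [eq_of_mem_ends (Sym2.out_fst_mem _) (x := x) (y := y) hx hy hx'
        (fun h => hx' (hxy.2 h))]
  calc (G.incidencesOn A).ncard ≤ (A ×ˢ (Set.univ : Set Bool)).ncard :=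
        Set.ncard_le_ncard_of_injOn f (fun p hp => ⟨hp.1, trivial⟩) hinj
    _ = 2 * A.ncard := by
      rw [Set.ncard_prod, Set.ncard_univ, Nat.card_eq_fintype_card, Fintype.card_bool, mul_comm]

theorem exists_mem_ends_ne_ne {x : V} (hx : G.degree x = 3) (e f : E) :
    ∃ g, x ∈ G.ends g ∧ g ≠ e ∧ g ≠ f := by
  obtain ⟨g, hg, hgef⟩ := Set.exists_mem_notMem_of_ncard_lt_ncard (s := {e, f})
    (t := G.edgesAt x) ((Set.ncard_pair_le e f).trans_lt (show 2 < G.degree x by omega))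
  exact ⟨g, hg, by simpa [not_or] using hgef⟩

theorem eq_or_eq_or_eq_of_mem_ends {x : V} (hx : G.degree x ≤ 3) {e f g : E}
    (he : x ∈ G.ends e) (hf : x ∈ G.ends f) (hg : x ∈ G.ends g) (hef : e ≠ f) (heg : e ≠ g)
    (hfg : f ≠ g) : ∀ r, x ∈ G.ends r → r = e ∨ r = f ∨ r = g := by
  intro r hr
  have hsub : {e, f, g} ⊆ G.edgesAt x := by simp [Set.insert_subset_iff, edgesAt, he, hf, hg]
  have hrx : r ∈ G.edgesAt x := hr
  rw [← Set.eq_of_subset_of_ncard_le hsub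
    (by rw [Set.ncard_eq_three.2 ⟨e, f, g, hef, heg, hfg, rfl⟩]; exact hx)] at hrx
  simpa using hrx

variable [Finite V] {L : V × E → Finset ℕ} {S : Set (V × E)} {φ : V × E → ℕ}

theorem ncard_incNbrs_union_le (S T : Set (V × E)) (q : V × E) :
    (G.incNbrs (S ∪ T) q).ncard ≤ (G.incNbrs S q).ncard + (T \ {q}).ncard := by
  have : G.incNbrs (S ∪ T) q ⊆ G.incNbrs S q ∪ (T \ {q}) := by
    rintro p ⟨hp | hp, hpq, hadj⟩
    · exact Or.inl ⟨hp, hpq, hadj⟩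
    · exact Or.inr ⟨hp, hpq⟩
  exact (Set.ncard_le_ncard this).trans (Set.ncard_union_le _ _)

theorem ncard_incNbrs_incidencesAvoiding_lt {W : Set V} {x z : V} {t : E} (hx : x ∈ W)
    (ht : G.ends t = s(x, z)) :
    (G.incNbrs (G.incidencesAvoiding W) (x, t)).ncard < G.degree z := by
  have hzt : (z, t) ∈ G.incidencesAt z := ⟨rfl, ht ▸ Sym2.mem_mk_right x z⟩
  have : G.incNbrs (G.incidencesAvoiding W) (x, t) ⊆ G.incidencesAt z \ {(z, t)} :=
    fun p hp => ⟨(incNbrs_incidencesAvoiding_subset hx ht hp).1, by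
      rintro rfl
      exact hp.1.2 x hx (ht ▸ Sym2.mem_mk_left x z)⟩
  calc _ ≤ _ := Set.ncard_le_ncard this
    _ < _ := by
      rw [Set.ncard_sdiff_singleton_of_mem hzt, ncard_incidencesAt]
      exact Nat.sub_lt (G.ncard_incidencesAt z ▸ (Set.ncard_pos).2 ⟨_, hzt⟩) one_pos

theorem ncard_incNbrs_incidencesAvoiding_le {W : Set V} {x z : V} {t : E} (hx : x ∉ W)
    (hz : z ∈ W) (ht : G.ends t = s(x, z)) :
    (G.incNbrs (G.incidencesAvoiding W) (x, t)).ncard ≤ 2 * (G.degree x - 1) := by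
  have hxt : x ∈ G.ends t := ht ▸ Sym2.mem_mk_left x z
  have : G.incNbrs (G.incidencesAvoiding W) (x, t) ⊆ G.incidencesOn (G.edgesAt x \ {t}) := by
    rintro ⟨y, r⟩ ⟨⟨hy, hr⟩, -, hadj⟩
    have hxr : x ∈ G.ends r := by
      rcases (incAdj_iff hxt hy).1 hadj with h | h
      · exact h
      · rw [ht, Sym2.mem_iff] at h
        obtain rfl | rfl := h
        · exact hy
        · exact absurd hy (hr y hz)
    exact ⟨⟨hxr, by rintro rfl; exact hr z hz (ht ▸ Sym2.mem_mk_right x z)⟩, hy⟩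
  calc _ ≤ _ := Set.ncard_le_ncard this
    _ ≤ _ := G.ncard_incidencesOn_le _
    _ = _ := by rw [Set.ncard_sdiff_singleton_of_mem (show t ∈ G.edgesAt x from hxt)]; rfl

theorem ncard_incNbrs_incidencesAvoiding_union_le {W : Set V} {N : Set (V × E)} {x : V}
    {t : E} (ht : ∀ z ∈ G.ends t, z ∈ W) (hx : x ∈ G.ends t) {r : V × E} (hr : r ∈ N)
    (hnadj : ¬ G.IncAdj x t r.1 r.2) :
    (G.incNbrs (G.incidencesAvoiding W ∪ N) (x, t)).ncard ≤ N.ncard - 1 := by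
  have hsub : G.incNbrs (G.incidencesAvoiding W ∪ N) (x, t) ⊆ N \ {r} := fun p hp =>
    ⟨incNbrs_incidencesAvoiding_union_subset ht hx N hp, by rintro rfl; exact hnadj hp.2.2⟩
  exact (Set.ncard_le_ncard hsub).trans_eq (Set.ncard_sdiff_singleton_of_mem hr)

theorem le_ncard_sdiff_image_incNbrs {x z : V} {t : E} (ht : G.ends t = s(x, z))
    (hS : ∀ p ∈ S, p.1 ∈ G.ends p.2 ∧ (x ∈ G.ends p.2 → p = (z, t))) (K : Finset ℕ) :
    K.card - G.degree z ≤ (↑K \ φ '' G.incNbrs S (x, t)).ncard := by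
  have := Set.le_ncard_sdiff (φ '' G.incNbrs S (x, t)) ↑K
  have := (Set.ncard_image_le (f := φ)).trans
    ((Set.ncard_le_ncard (incNbrs_subset_incidencesAt ht hS)).trans (G.ncard_incidencesAt z).le)
  rw [Set.ncard_coe_finset] at *
  omega

theorem IsIncListColoringOn.exists_union (hφ : G.IsIncListColoringOn L S φ) (T : Set (V × E))
    (hT : ∀ q ∈ T, (G.incNbrs (S ∪ T) q).ncard < (L q).card) :
    ∃ ψ, G.IsIncListColoringOn L (S ∪ T) ψ ∧ Set.EqOn ψ φ (S \ T) := by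
  classical
  suffices key : ∀ T' ⊆ T, ∃ ψ, G.IsIncListColoringOn L (S ∪ T') ψ ∧ Set.EqOn ψ φ (S \ T') from
    key T subset_rfl
  intro T' hT'
  induction T', Set.toFinite T' using Set.Finite.induction_on with
  | empty => exact ⟨φ, by simpa using hφ, fun _ _ => rfl⟩
  | @insert q T' hqT' _ ih =>
    obtain ⟨ψ, hψ, heq⟩ := ih ((Set.subset_insert q T').trans hT')
    have hnbrs : G.incNbrs (S ∪ T') q ⊆ G.incNbrs (S ∪ T) q := fun p ⟨hp, hpq⟩ =>
      ⟨Set.union_subset_union_right S ((Set.subset_insert q T').trans hT') hp, hpq⟩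
    have hlt : (↑(L q) ∩ ψ '' G.incNbrs (S ∪ T') q).ncard < (L q).card :=
      calc _ ≤ (ψ '' G.incNbrs (S ∪ T') q).ncard := Set.ncard_le_ncard Set.inter_subset_right
        _ ≤ (G.incNbrs (S ∪ T') q).ncard := Set.ncard_image_le
        _ ≤ (G.incNbrs (S ∪ T) q).ncard := Set.ncard_le_ncard hnbrs
        _ < _ := hT q (hT' (Set.mem_insert q T'))
    obtain ⟨c, hc⟩ := hψ.exists_update hlt
    refine ⟨Function.update ψ q c, by simpa [Set.union_insert] using hc, fun p hp => ?_⟩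
    have hpq : p ≠ q := fun h => hp.2 (h ▸ Set.mem_insert q T')
    simpa [hpq] using heq ⟨hp.1, fun h => hp.2 (Set.mem_insert_of_mem q h)⟩

theorem IsIncListColoringOn.exists_insert_union (hφ : G.IsIncListColoringOn L S φ)
    {T : Set (V × E)} {q : V × E}
    (hT : ∀ p ∈ T, (G.incNbrs S p).ncard + (T \ {p}).ncard < (L p).card)
    (hq : (↑(L q) ∩ φ '' G.incNbrs S q).ncard + T.ncard < (L q).card) :
    ∃ ψ, G.IsIncListColoringOn L (insert q (S ∪ T)) ψ := by
  classical
  obtain ⟨ψ, hψ, heq⟩ :=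
    hφ.exists_union T fun p hp => (G.ncard_incNbrs_union_le S T p).trans_lt (hT p hp)
  have hsub : ↑(L q) ∩ ψ '' G.incNbrs (S ∪ T) q ⊆ ↑(L q) ∩ φ '' G.incNbrs S q ∪ ψ '' T := by
    rintro c ⟨hcL, p, ⟨hpST, hpq, hadj⟩, rfl⟩
    by_cases hpT : p ∈ T
    · exact Or.inr ⟨p, hpT, rfl⟩
    · have hpS := hpST.resolve_right hpT
      exact Or.inl ⟨hcL, p, ⟨hpS, hpq, hadj⟩, (heq ⟨hpS, hpT⟩).symm⟩
  have hT : (ψ '' T).ncard ≤ T.ncard := Set.ncard_image_le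
  obtain ⟨c, hc⟩ := hψ.exists_update (q := q) <| lt_of_le_of_lt
    ((Set.ncard_le_ncard hsub).trans ((Set.ncard_union_le _ _).trans (by omega))) hq
  exact ⟨_, hc⟩

theorem IsIncListColoringOn.exists_union_of_boundary (hdeg : ∀ x, G.degree x ≤ 3)
    (hL : ∀ v e, G.IsInc v e → (L (v, e)).card = 6) {W : Set V}
    (hφ : G.IsIncListColoringOn L (G.incidencesAvoiding W) φ) {T : Set (V × E)}
    (hT : T.ncard ≤ 2) (hbdry : ∀ p ∈ T, p.1 ∉ W ∧ ∃ z ∈ W, G.ends p.2 = s(p.1, z)) :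
    ∃ ψ, G.IsIncListColoringOn L (G.incidencesAvoiding W ∪ T) ψ := by
  obtain ⟨ψ, hψ, -⟩ := hφ.exists_union T fun ⟨x, t⟩ hq => by
    obtain ⟨hx, z, hz, ht⟩ : x ∉ W ∧ ∃ z ∈ W, G.ends t = s(x, z) := hbdry _ hq
    have := ncard_incNbrs_incidencesAvoiding_le hx hz ht
    have := G.ncard_incNbrs_union_le (G.incidencesAvoiding W) T (x, t)
    have := Set.ncard_sdiff_singleton_of_mem hq
    have := hdeg x
    rw [hL _ _ (show x ∈ G.ends t from ht ▸ Sym2.mem_mk_left x z)]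
    omega
  exact ⟨ψ, hψ⟩

theorem incChoosable_of_degree_le_two (hdeg : ∀ x, G.degree x ≤ 3) {v : V}
    (hv : G.degree v ≤ 2) (hdel : (G.deleteVerts {v}).IncChoosable 6) : G.IncChoosable 6 := by
  intro L hL
  obtain ⟨φ, hφ⟩ := hdel.exists_coloringOn_incidencesAvoiding hL
  set S := G.incidencesAvoiding {v}
  set T₁ := {p : V × E | v ∈ G.ends p.2 ∧ p.1 ∈ G.ends p.2 ∧ p.1 ≠ v}
  set T₂ := G.incidencesAt v
  have hT₂ : T₂.ncard ≤ 2 := (G.ncard_incidencesAt v).trans_le hv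
  have hT₁ : T₁.ncard ≤ 2 := by
    refine (Set.ncard_le_ncard_of_injOn Prod.snd (fun p hp => hp.1) ?_).trans hv
    rintro ⟨x, t⟩ ⟨hvt, hxt, hxv⟩ ⟨y, t'⟩ ⟨-, hyt, hyv⟩ (rfl : t = t')
    rw [eq_of_mem_ends (x := x) (y := y) hvt hxt hyt hxv hyv]
  obtain ⟨φ₁, hφ₁⟩ : ∃ φ₁, G.IsIncListColoringOn L (S ∪ T₁) φ₁ :=
    hφ.exists_union_of_boundary hdeg hL hT₁ fun ⟨x, t⟩ ⟨hvt, hxt, hxv⟩ =>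
    ⟨hxv, v, rfl, (Sym2.mem_and_mem_iff hxv).1 ⟨hxt, hvt⟩⟩
  obtain ⟨φ₂, hφ₂, -⟩ := hφ₁.exists_union T₂ fun ⟨x, t⟩ hq => by
    have hT := Set.ncard_sdiff_singleton_of_mem hq
    obtain ⟨rfl, hvt⟩ : x = v ∧ v ∈ G.ends t := hq
    obtain ⟨z, ht⟩ := exists_ends_eq_of_mem hvt
    have hS : (G.incNbrs S (x, t)).ncard < G.degree z :=
      ncard_incNbrs_incidencesAvoiding_lt (Set.mem_singleton x) ht
    have := G.ncard_incNbrs_union_le S T₁ (x, t)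
    have := G.ncard_incNbrs_union_le (S ∪ T₁) T₂ (x, t)
    have := Set.ncard_sdiff_singleton_le T₁ (x, t)
    have := hdeg z
    rw [hL _ _ hvt]
    omega
  refine ⟨φ₂, hφ₂.isIncListColoring fun x t hxt => ?_⟩
  by_cases hvt : v ∈ G.ends t
  · by_cases hxv : x = v
    · exact Or.inr ⟨hxv, hxv ▸ hxt⟩
    · exact Or.inl (Or.inr ⟨hvt, hxt, hxv⟩)
  · exact Or.inl (Or.inl ⟨hxt, by simpa using hvt⟩)

theorem incChoosable_of_triple_edge (hdeg : ∀ x, G.degree x ≤ 3) {u v : V} {e f g : E}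
    (he : G.ends e = s(u, v)) (hf : G.ends f = s(u, v)) (hg : G.ends g = s(u, v))
    (hef : e ≠ f) (heg : e ≠ g) (hfg : f ≠ g) (hdel : (G.deleteVerts {u, v}).IncChoosable 6) :
    G.IncChoosable 6 := by
  intro L hL
  obtain ⟨φ, hφ⟩ := hdel.exists_coloringOn_incidencesAvoiding hL
  set T := G.incidencesOn {e, f, g}
  have hT : T.ncard ≤ 6 := (G.ncard_incidencesOn_le _).trans
    (by rw [Set.ncard_eq_three.2 ⟨e, f, g, hef, heg, hfg, rfl⟩])
  obtain ⟨ψ, hψ, -⟩ := hφ.exists_union T fun ⟨x, t⟩ hq => by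
    have := Set.ncard_sdiff_singleton_of_mem hq
    obtain ⟨ht, hxt⟩ : t ∈ ({e, f, g} : Set E) ∧ x ∈ G.ends t := hq
    have htuv : G.ends t = s(u, v) := by rcases ht with rfl | rfl | rfl <;> assumption
    have hsub : G.incNbrs (G.incidencesAvoiding {u, v} ∪ T) (x, t) ⊆ T \ {(x, t)} := fun p hp =>
      ⟨incNbrs_incidencesAvoiding_union_subset (W := {u, v}) (by simp [htuv, Sym2.mem_iff]) hxt
        T hp, hp.2.1⟩
    have := Set.ncard_le_ncard hsub
    rw [hL _ _ hxt]
    omega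
  refine ⟨ψ, hψ.isIncListColoring fun x t (hxt : x ∈ G.ends t) => ?_⟩
  have hu := eq_or_eq_or_eq_of_mem_ends (hdeg u) (he ▸ Sym2.mem_mk_left u v)
    (hf ▸ Sym2.mem_mk_left u v) (hg ▸ Sym2.mem_mk_left u v) hef heg hfg
  have hv := eq_or_eq_or_eq_of_mem_ends (hdeg v) (he ▸ Sym2.mem_mk_right u v)
    (hf ▸ Sym2.mem_mk_right u v) (hg ▸ Sym2.mem_mk_right u v) hef heg hfg
  by_cases hut : u ∈ G.ends t
  · exact Or.inr ⟨by simpa using hu t hut, hxt⟩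
  by_cases hvt : v ∈ G.ends t
  · exact Or.inr ⟨by simpa using hv t hvt, hxt⟩
  · exact Or.inl ⟨hxt, by simp [hut, hvt]⟩

theorem IsIncListColoringOn.exists_union_pendant_pair (hdeg : ∀ x, G.degree x ≤ 3)
    (hL : ∀ v e, G.IsInc v e → (L (v, e)).card = 6) {u v w y : V} {g h : E}
    (hφ : G.IsIncListColoringOn L (G.incidencesAvoiding {u, v}) φ)
    (hg : G.ends g = s(u, w)) (hh : G.ends h = s(v, y)) (huv : u ≠ v) (hwv : w ≠ v)
    (hyu : y ≠ u) (K : Finset ℕ) (hK : K.card ≤ 6) :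
    ∃ ψ, G.IsIncListColoringOn L
      (G.incidencesAvoiding {u, v} ∪ ({(w, g), (y, h)} ∪ {(u, g), (v, h)})) ψ ∧
      (↑K ∩ ψ '' {(w, g), (u, g), (v, h)}).ncard ≤ 2 := by
  classical
  have hwu : w ≠ u := fun hwu => G.loopless g (by simp [hg, hwu])
  have hyv : y ≠ v := fun hyv => G.loopless h (by simp [hh, hyv])
  have hug : u ∈ G.ends g := hg ▸ Sym2.mem_mk_left u w
  have hwg : w ∈ G.ends g := hg ▸ Sym2.mem_mk_right u w
  have hvh : v ∈ G.ends h := hh ▸ Sym2.mem_mk_left v y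
  have hyh : y ∈ G.ends h := hh ▸ Sym2.mem_mk_right v y
  have hvg : v ∉ G.ends g := by simp [hg, Sym2.mem_iff, huv.symm, hwv.symm]
  have huh : u ∉ G.ends h := by simp [hh, Sym2.mem_iff, huv, hyu.symm]
  set S₁ := G.incidencesAvoiding {u, v} ∪ {(w, g), (y, h)}
  obtain ⟨φ₁, hφ₁⟩ : ∃ φ₁, G.IsIncListColoringOn L S₁ φ₁ :=
    hφ.exists_union_of_boundary hdeg hL (Set.ncard_pair_le _ _) (by
      rintro p (rfl | rfl)
      · exact ⟨by simp [hwu, hwv], u, by simp, hg.trans Sym2.eq_swap⟩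
      · exact ⟨by simp [hyu, hyv], v, by simp, hh.trans Sym2.eq_swap⟩)
  have hfree {x z : V} {t : E} (hx : x ∈ G.ends t) (ht : G.ends t = s(x, z))
      (hS : ∀ p ∈ S₁, p.1 ∈ G.ends p.2 ∧ (x ∈ G.ends p.2 → p = (z, t))) :
      3 ≤ ((L (x, t) : Set ℕ) \ φ₁ '' G.incNbrs S₁ (x, t)).ncard := by
    have := le_ncard_sdiff_image_incNbrs (φ := φ₁) ht hS (L (x, t))
    have := hdeg z
    rw [hL _ _ hx] at *
    omega
  set A := ↑(L (u, g)) \ φ₁ '' G.incNbrs S₁ (u, g)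
  set B := ↑(L (v, h)) \ φ₁ '' G.incNbrs S₁ (v, h)
  have hA : 3 ≤ A.ncard := hfree hug hg <| by
    rintro p (⟨hp, hpW⟩ | rfl | rfl)
    · exact ⟨hp, fun hu => absurd hu (hpW u (by simp))⟩
    · exact ⟨hwg, fun _ => rfl⟩
    · exact ⟨hyh, fun hu => absurd hu huh⟩
  have hB : 3 ≤ B.ncard := hfree hvh hh <| by
    rintro p (⟨hp, hpW⟩ | rfl | rfl)
    · exact ⟨hp, fun hv => absurd hv (hpW v (by simp))⟩
    · exact ⟨hwg, fun hv => absurd hv hvg⟩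
    · exact ⟨hyh, fun _ => rfl⟩
  have hnadj : ¬ G.IncAdj v h u g := by rw [incAdj_iff hvh hug]; tauto
  obtain ⟨a, b, hab, hsave⟩ := hφ₁.exists_update_update_ncard_inter_le_two hnadj K (φ₁ (w, g))
    (Set.nonempty_of_ncard_ne_zero (s := A) (by omega))
    (Set.nonempty_of_ncard_ne_zero (s := B) (by omega))
    (hK.trans (show 6 ≤ A.ncard + B.ncard by omega))
  refine ⟨Function.update (Function.update φ₁ (u, g) a) (v, h) b, ?_, ?_⟩
  · convert hab using 1
    ext p
    simp only [S₁, Set.mem_union, Set.mem_insert_iff, Set.mem_singleton_iff]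
    tauto
  · have hne₁ : (w, g) ≠ (u, g) := by simp [hwu]
    have hne₂ : (w, g) ≠ (v, h) := by simp [hwv]
    have hne₃ : (u, g) ≠ (v, h) := by simp [huv]
    simpa [Set.image_insert_eq, Function.update_apply, hne₁, hne₂, hne₃] using hsave

theorem IsIncListColoringOn.exists_insert_union_double_edge
    (hL : ∀ v e, G.IsInc v e → (L (v, e)).card = 6) {u v w y : V} {e f g h : E}
    (he : G.ends e = s(u, v)) (hf : G.ends f = s(u, v)) (hg : G.ends g = s(u, w))
    (hh : G.ends h = s(v, y)) (hwv : w ≠ v) (hyu : y ≠ u)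
    (hφ : G.IsIncListColoringOn L
      (G.incidencesAvoiding {u, v} ∪ ({(w, g), (y, h)} ∪ {(u, g), (v, h)})) φ)
    (hsave : (↑(L (u, e)) ∩ φ '' {(w, g), (u, g), (v, h)}).ncard ≤ 2) :
    ∃ ψ, G.IsIncListColoringOn L (insert (u, e)
      (G.incidencesAvoiding {u, v} ∪ ({(w, g), (y, h)} ∪ {(u, g), (v, h)}) ∪
        {(u, f), (v, e), (v, f)})) ψ := by
  have huv : u ≠ v := fun huv => G.loopless e (by simp [he, huv])
  have hwu : w ≠ u := fun hwu => G.loopless g (by simp [hg, hwu])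
  have hyv : y ≠ v := fun hyv => G.loopless h (by simp [hh, hyv])
  have hue : u ∈ G.ends e := he ▸ Sym2.mem_mk_left u v
  have hve : v ∈ G.ends e := he ▸ Sym2.mem_mk_right u v
  have huf : u ∈ G.ends f := hf ▸ Sym2.mem_mk_left u v
  have hvf : v ∈ G.ends f := hf ▸ Sym2.mem_mk_right u v
  have hwg : w ∈ G.ends g := hg ▸ Sym2.mem_mk_right u w
  have hyh : y ∈ G.ends h := hh ▸ Sym2.mem_mk_right v y
  set N : Set (V × E) := {(w, g), (y, h)} ∪ {(u, g), (v, h)}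
  have hN : N.ncard ≤ 4 :=
    (Set.ncard_union_le _ _).trans (add_le_add (Set.ncard_pair_le _ _) (Set.ncard_pair_le _ _))
  have hW {t : E} (ht : G.ends t = s(u, v)) : ∀ z ∈ G.ends t, z ∈ ({u, v} : Set V) := by
    simp [ht, Sym2.mem_iff]
  have hT : ({(u, f), (v, e), (v, f)} : Set (V × E)).ncard ≤ 3 :=
    (Set.ncard_insert_le _ _).trans (Nat.succ_le_succ (Set.ncard_pair_le _ _))
  refine hφ.exists_insert_union (fun p hp => ?_) ?_
  · have := Set.ncard_sdiff_singleton_of_mem hp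
    rcases hp with rfl | rfl | rfl
    · have := ncard_incNbrs_incidencesAvoiding_union_le (N := N) (hW hf) huf (r := (y, h))
        (by simp [N])
        (by rw [incAdj_iff huf hyh]; simp [hh, hf, huv, hyu, hyv, Ne.symm hyu])
      rw [hL _ _ huf]; omega
    · have := ncard_incNbrs_incidencesAvoiding_union_le (N := N) (hW he) hve (r := (w, g))
        (by simp [N])
        (by rw [incAdj_iff hve hwg]; simp [hg, he, hwu, hwv, Ne.symm huv, Ne.symm hwv])
      rw [hL _ _ hve]; omega
    · have := ncard_incNbrs_incidencesAvoiding_union_le (N := N) (hW hf) hvf (r := (w, g))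
        (by simp [N])
        (by rw [incAdj_iff hvf hwg]; simp [hg, hf, hwu, hwv, Ne.symm huv, Ne.symm hwv])
      rw [hL _ _ hvf]; omega
  · have hsub : G.incNbrs (G.incidencesAvoiding {u, v} ∪ N) (u, e) ⊆ {(w, g), (u, g), (v, h)} :=
      fun p hp => by
        rcases incNbrs_incidencesAvoiding_union_subset (hW he) hue N hp with
          (rfl | rfl) | (rfl | rfl)
        all_goals try simp
        have hadj := hp.2.2
        rw [incAdj_iff hue hyh] at hadj
        simp [hh, he, huv, hyu, hyv, Ne.symm hyu] at hadj
    have := (Set.ncard_le_ncard (Set.inter_subset_inter_right _ (Set.image_mono hsub))).trans hsave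
    rw [hL _ _ hue]
    omega

theorem incChoosable_of_double_edge (hdeg : ∀ x, G.degree x ≤ 3) {u v w y : V} {e f g h : E}
    (he : G.ends e = s(u, v)) (hf : G.ends f = s(u, v)) (hg : G.ends g = s(u, w))
    (hh : G.ends h = s(v, y)) (hwv : w ≠ v) (hyu : y ≠ u)
    (hu : ∀ r, u ∈ G.ends r → r = e ∨ r = f ∨ r = g)
    (hv : ∀ r, v ∈ G.ends r → r = e ∨ r = f ∨ r = h)
    (hdel : (G.deleteVerts {u, v}).IncChoosable 6) : G.IncChoosable 6 := by
  intro L hL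
  have huv : u ≠ v := fun huv => G.loopless e (by simp [he, huv])
  obtain ⟨φ, hφ⟩ := hdel.exists_coloringOn_incidencesAvoiding hL
  obtain ⟨ψ, hψ, hsave⟩ := hφ.exists_union_pendant_pair hdeg hL hg hh huv hwv hyu (L (u, e))
    (hL u e (show u ∈ G.ends e from he ▸ Sym2.mem_mk_left u v)).le
  obtain ⟨ψ', hψ'⟩ := hψ.exists_insert_union_double_edge hL he hf hg hh hwv hyu hsave
  refine ⟨ψ', hψ'.isIncListColoring fun x t (hxt : x ∈ G.ends t) => ?_⟩
  by_cases hut : u ∈ G.ends t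
  · rcases hu t hut with rfl | rfl | rfl <;>
      rw [‹G.ends t = _›, Sym2.mem_iff] at hxt <;> rcases hxt with rfl | rfl <;> simp
  by_cases hvt : v ∈ G.ends t
  · rcases hv t hvt with rfl | rfl | rfl <;>
      rw [‹G.ends t = _›, Sym2.mem_iff] at hxt <;> rcases hxt with rfl | rfl <;> simp
  · simp [incidencesAvoiding, hxt, hut, hvt]

theorem incChoosable_of_parallel (hdeg : ∀ x, G.degree x ≤ 3) {u v : V} {e f : E}
    (hu : G.degree u = 3) (hv : G.degree v = 3) (he : G.ends e = s(u, v))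
    (hf : G.ends f = s(u, v)) (hef : e ≠ f) (hdel : (G.deleteVerts {u, v}).IncChoosable 6) :
    G.IncChoosable 6 := by
  have huv : u ≠ v := fun huv => G.loopless e (by simp [he, huv])
  obtain ⟨g, hug, hge, hgf⟩ := exists_mem_ends_ne_ne hu e f
  have hedges_u := eq_or_eq_or_eq_of_mem_ends (hdeg u) (he ▸ Sym2.mem_mk_left u v)
    (hf ▸ Sym2.mem_mk_left u v) hug hef hge.symm hgf.symm
  by_cases hvg : v ∈ G.ends g
  · exact incChoosable_of_triple_edge hdeg he hf ((Sym2.mem_and_mem_iff huv).1 ⟨hug, hvg⟩)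
      hef hge.symm hgf.symm hdel
  obtain ⟨w, hg⟩ := exists_ends_eq_of_mem hug
  obtain ⟨h, hvh, hhe, hhf⟩ := exists_mem_ends_ne_ne hv e f
  obtain ⟨y, hh⟩ := exists_ends_eq_of_mem hvh
  have hwv : w ≠ v := by
    rintro rfl
    exact hvg (hg ▸ Sym2.mem_mk_right u w)
  have hyu : y ≠ u := by
    rintro rfl
    rcases hedges_u h (hh ▸ Sym2.mem_mk_right v y) with rfl | rfl | rfl
    exacts [hhe rfl, hhf rfl, hvg hvh]
  exact incChoosable_of_double_edge hdeg he hf hg hh hwv hyu hedges_u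
    (eq_or_eq_or_eq_of_mem_ends (hdeg v) (he ▸ Sym2.mem_mk_right u v)
      (hf ▸ Sym2.mem_mk_right u v) hvh hef hhe.symm hhf.symm) hdel

end Finite

end Multigraph

/-- A minimum counterexample to "every subcubic loopless multigraph is incidence 6-choosable"
is cubic and has no multiple edges: if `G` is a loopless multigraph with maximum degree at
most 3 that is not incidence 6-choosable, while every loopless multigraph with maximum degree
at most 3 on fewer vertices is incidence 6-choosable, then every vertex of `G` has degree
exactly 3 and no two distinct edges of `G` have the same pair of endpoints. -/
theorem min_counterexample_is_cubic_and_simple {V E : Type} [Fintype V] [Fintype E]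
    (G : Multigraph V E) (hdeg : ∀ v, G.degree v ≤ 3)
    (hnot : ¬ G.IncChoosable 6)
    (hmin : ∀ (V' E' : Type) [Fintype V'] [Fintype E'] (G' : Multigraph V' E'),
      (∀ v, G'.degree v ≤ 3) → Fintype.card V' < Fintype.card V → G'.IncChoosable 6) :
    (∀ v, G.degree v = 3) ∧ (∀ e f : E, G.ends e = G.ends f → e = f) := by
  classical
  have hdel {W : Set V} (hW : W.Nonempty) : (G.deleteVerts W).IncChoosable 6 :=
    hmin _ _ _ (fun x => (G.degree_deleteVerts_le W x).trans (hdeg x))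
      (Fintype.card_subtype_lt (p := (· ∈ Wᶜ)) (not_not.2 hW.some_mem))
  have hcubic (v : V) : G.degree v = 3 := by
    by_contra hv
    exact hnot (G.incChoosable_of_degree_le_two hdeg (by have := hdeg v; omega)
      (hdel (Set.singleton_nonempty v)))
  refine ⟨hcubic, fun e f hends => by_contra fun hef => hnot ?_⟩
  obtain ⟨u, v, he⟩ := Sym2.exists (f := (G.ends e = ·)) |>.1 ⟨_, rfl⟩
  exact G.incChoosable_of_parallel hdeg (hcubic u) (hcubic v) he (hends ▸ he) hef
    (hdel (Set.insert_nonempty u {v}))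
end

section
/- Let G be a subcubic simple graph (maximum degree at most 3) and L an incidence 6-list assignment of G. Let φ be an incidence L-coloring of a subgraph H of G. If e and e' are edges of G not in H and e is incident to e' (they share an endpoint), then φ can be extended to an incidence L-coloring of the subgraph H + e obtained from H by adding the edge e. -/
/-- `(v, e)` is an incidence of the simple graph `G` when `e` is an edge of `G` and `v` is an
endpoint of `e`. -/
def IsIncidence {V : Type*} (G : SimpleGraph V) (v : V) (e : Sym2 V) : Prop :=
  e ∈ G.edgeSet ∧ v ∈ e

/-- Two incidences `(v, e)` and `(w, f)` are adjacent if `v = w`, or `e = f`, or the edge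
joining `v` and `w` is `e` or `f`. -/
def IncAdj {V : Type*} (v : V) (e : Sym2 V) (w : V) (f : Sym2 V) : Prop :=
  v = w ∨ e = f ∨ s(v, w) = e ∨ s(v, w) = f

/-- `φ` is an incidence coloring of `G` choosing colors from the list assignment `L`. -/
def IsIncListColoring {V : Type*} (G : SimpleGraph V) (L : V × Sym2 V → Finset ℕ)
    (φ : V × Sym2 V → ℕ) : Prop :=
  (∀ v e, IsIncidence G v e → φ (v, e) ∈ L (v, e)) ∧
  (∀ v e w f, IsIncidence G v e → IsIncidence G w f → (v, e) ≠ (w, f) → IncAdj v e w f →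
    φ (v, e) ≠ φ (w, f))

/-- `G` is incidence `k`-choosable: for every assignment of lists of `k` colors to the
incidences of `G` there is an incidence coloring choosing colors from the lists. -/
def IncChoosable {V : Type*} (G : SimpleGraph V) (k : ℕ) : Prop :=
  ∀ L : V × Sym2 V → Finset ℕ, (∀ v e, IsIncidence G v e → (L (v, e)).card = k) →
    ∃ φ, IsIncListColoring G L φ

/-- The incidence choice number of `G`: the least `k` such that `G` is incidence
`k`-choosable. -/
noncomputable def incChoiceNumber {V : Type*} (G : SimpleGraph V) : ℕ :=
  sInf {k | IncChoosable G k}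

/-- The degree of a vertex of a simple graph (number of neighbors). -/
noncomputable def vdeg {V : Type*} (G : SimpleGraph V) (v : V) : ℕ :=
  (G.neighborSet v).ncard

lemma IncAdj.symm' {V : Type*} {v w : V} {e f : Sym2 V} (h : IncAdj v e w f) :
    IncAdj w f v e := by
  unfold IncAdj at *
  rw [Sym2.eq_swap (a := w)]
  tauto

lemma pick_color (L : Finset ℕ) (hL : L.card = 6) (F : Set ℕ) (hF : F.Finite)
    (h5 : F.ncard ≤ 5) : ∃ c ∈ L, c ∉ F := by
  by_contra h
  push_neg at h
  have hsub : (↑L : Set ℕ) ⊆ F := fun c hc => h c hc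
  have := Set.ncard_le_ncard hsub hF
  rw [Set.ncard_coe_finset, hL] at this
  omega

lemma incidenceSet_ncard {V : Type*} (G : SimpleGraph V) (v : V) :
    (G.incidenceSet v).ncard = (G.neighborSet v).ncard := by
  classical
  exact Nat.card_congr (G.incidenceSetEquivNeighborSet v)

/-- counting lemma -/
lemma count_S {V : Type*} [Fintype V] (H : SimpleGraph V) (p q : V) (hpq : p ≠ q)
    (heH : s(p, q) ∉ H.edgeSet) :
    {x : V × Sym2 V | IsIncidence H x.1 x.2 ∧ IncAdj p s(p, q) x.1 x.2}.ncard ≤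
      2 * (H.neighborSet p).ncard + (H.neighborSet q).ncard := by
  classical
  set S := {x : V × Sym2 V | IsIncidence H x.1 x.2 ∧ IncAdj p s(p, q) x.1 x.2} with hS
  have hsub : S ⊆ (fun f => (p, f)) '' H.incidenceSet p ∪
      (fun f => (q, f)) '' H.incidenceSet q ∪
      (fun w => (w, s(p, w))) '' H.neighborSet p := by
    rintro ⟨w, f⟩ ⟨⟨hfH, hwf⟩, hadj⟩
    rcases hadj with rfl | rfl | h | h
    · exact Or.inl (Or.inl ⟨f, ⟨hfH, hwf⟩, rfl⟩)
    · exact absurd hfH heH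
    · have : w = q := by
        rcases Sym2.eq_iff.mp h with ⟨-, rfl⟩ | ⟨h1, h2⟩
        · rfl
        · exact absurd h1 hpq
      subst this
      exact Or.inl (Or.inr ⟨f, ⟨hfH, hwf⟩, rfl⟩)
    · rw [← h] at hfH
      exact Or.inr ⟨w, H.mem_edgeSet.mp hfH, by simp [h]⟩
  calc S.ncard ≤ _ := Set.ncard_le_ncard hsub (Set.toFinite _)
    _ ≤ ((fun f => (p, f)) '' H.incidenceSet p ∪
          (fun f => (q, f)) '' H.incidenceSet q).ncard +
          ((fun w => (w, s(p, w))) '' H.neighborSet p).ncard :=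
      Set.ncard_union_le _ _
    _ ≤ (((fun f => (p, f)) '' H.incidenceSet p).ncard +
          ((fun f => (q, f)) '' H.incidenceSet q).ncard) +
          ((fun w => (w, s(p, w))) '' H.neighborSet p).ncard := by
      exact Nat.add_le_add_right (Set.ncard_union_le _ _) _
    _ ≤ (H.incidenceSet p).ncard + (H.incidenceSet q).ncard + (H.neighborSet p).ncard := by
      gcongr <;> exact Set.ncard_image_le (Set.toFinite _)
    _ ≤ _ := by
      rw [incidenceSet_ncard, incidenceSet_ncard]; omega


/-- Let `G` be a subcubic simple graph, `L` an incidence 6-list assignment of `G`, and `φ` an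
incidence `L`-coloring of a subgraph `H ≤ G` (proper with respect to incidence adjacency).
If `e` and `e'` are edges of `G` not in `H` sharing an endpoint, then `φ` extends to an
incidence `L`-coloring of `H + e`. -/
theorem extend_incidence_coloring {V : Type*} [Fintype V] (G H : SimpleGraph V) (hHG : H ≤ G)
    (hsub : ∀ v, vdeg G v ≤ 3)
    (L : V × Sym2 V → Finset ℕ)
    (hL : ∀ v e, IsIncidence G v e → (L (v, e)).card = 6)
    (φ : V × Sym2 V → ℕ) (hφ : IsIncListColoring H L φ)
    (e e' : Sym2 V) (he : e ∈ G.edgeSet) (heH : e ∉ H.edgeSet)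
    (he' : e' ∈ G.edgeSet) (he'H : e' ∉ H.edgeSet) (hne : e ≠ e')
    (hshare : ∃ v, v ∈ e ∧ v ∈ e') :
    ∃ φ' : V × Sym2 V → ℕ,
      IsIncListColoring (H ⊔ SimpleGraph.fromEdgeSet {e}) L φ' ∧
      ∀ v f, IsIncidence H v f → φ' (v, f) = φ (v, f) := by
  classical
  obtain ⟨z, hze, hze'⟩ := hshare
  obtain ⟨u, hu⟩ : ∃ u, s(z, u) = e := ⟨Sym2.Mem.other hze, Sym2.other_spec hze⟩
  obtain ⟨b, hb⟩ : ∃ b, s(z, b) = e' := ⟨Sym2.Mem.other hze', Sym2.other_spec hze'⟩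
  subst hu; subst hb
  have hzu : G.Adj z u := G.mem_edgeSet.mp he
  have hzb : G.Adj z b := G.mem_edgeSet.mp he'
  have hub : u ≠ b := fun h => hne (by rw [h])
  -- degree bounds
  have hGz := hsub z
  have hGu := hsub u
  unfold vdeg at hGz hGu
  have hu_not : u ∉ H.neighborSet z := fun h => heH (H.mem_edgeSet.mpr h)
  have hb_not : b ∉ H.neighborSet z := fun h => he'H (H.mem_edgeSet.mpr h)
  have hz_not : z ∉ H.neighborSet u := fun h => heH (H.mem_edgeSet.mpr h.symm)
  have dz : (H.neighborSet z).ncard ≤ 1 := by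
    have hsubz : insert u (insert b (H.neighborSet z)) ⊆ G.neighborSet z := by
      rintro w (rfl | rfl | hw)
      · exact hzu
      · exact hzb
      · exact hHG hw
    have h1 := Set.ncard_le_ncard hsubz (Set.toFinite _)
    rw [Set.ncard_insert_of_notMem (by simp [hub, hu_not]) (Set.toFinite _),
      Set.ncard_insert_of_notMem hb_not (Set.toFinite _)] at h1
    omega
  have du : (H.neighborSet u).ncard ≤ 2 := by
    have hsubu : insert z (H.neighborSet u) ⊆ G.neighborSet u := by
      rintro w (rfl | hw)
      · exact hzu.symm
      · exact hHG hw
    have h1 := Set.ncard_le_ncard hsubu (Set.toFinite _)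
    rw [Set.ncard_insert_of_notMem hz_not (Set.toFinite _)] at h1
    omega
  -- counting
  set S_far := {x : V × Sym2 V | IsIncidence H x.1 x.2 ∧ IncAdj u s(z, u) x.1 x.2} with hSfar
  set S_near := {x : V × Sym2 V | IsIncidence H x.1 x.2 ∧ IncAdj z s(z, u) x.1 x.2} with hSnear
  have hcount_far : S_far.ncard ≤ 2 * (H.neighborSet u).ncard + (H.neighborSet z).ncard := by
    have h := count_S H u z hzu.ne' (by rwa [Sym2.eq_swap])
    rw [show (s(u, z) : Sym2 V) = s(z, u) from Sym2.eq_swap] at h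
    exact h
  have hcount_near : S_near.ncard ≤ 2 * (H.neighborSet z).ncard + (H.neighborSet u).ncard :=
    count_S H z u hzu.ne heH
  -- color choices
  have hLfar : (L (u, s(z, u))).card = 6 := hL u _ ⟨he, Sym2.mem_mk_right z u⟩
  have hLnear : (L (z, s(z, u))).card = 6 := hL z _ ⟨he, Sym2.mem_mk_left z u⟩
  obtain ⟨c1, hc1L, hc1F⟩ := pick_color (L (u, s(z, u))) hLfar (φ '' S_far)
    ((Set.toFinite S_far).image φ)
    (le_trans (Set.ncard_image_le (Set.toFinite _)) (by omega))
  obtain ⟨c2, hc2L, hc2F⟩ := pick_color (L (z, s(z, u))) hLnear (insert c1 (φ '' S_near))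
    (((Set.toFinite S_near).image φ).insert c1)
    (le_trans (Set.ncard_insert_le _ _)
      (by have := Set.ncard_image_le (s := S_near) (f := φ) (Set.toFinite _); omega))
  have hc2c1 : c2 ≠ c1 := fun h => hc2F (by rw [h]; exact Set.mem_insert c1 _)
  -- the extended coloring
  set φ' : V × Sym2 V → ℕ := fun p =>
    if p = (u, s(z, u)) then c1 else if p = (z, s(z, u)) then c2 else φ p with hφ'
  have hold : ∀ w f, f ∈ H.edgeSet → φ' (w, f) = φ (w, f) := by
    intro w f hf
    have h1 : (w, f) ≠ (u, s(z, u)) := fun h => heH (by rw [← (Prod.mk.injEq ..).mp h |>.2]; exact hf)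
    have h2 : (w, f) ≠ (z, s(z, u)) := fun h => heH (by rw [← (Prod.mk.injEq ..).mp h |>.2]; exact hf)
    rw [hφ']
    simp only [h1, h2, if_false, if_neg]
  have hfar_val : φ' (u, s(z, u)) = c1 := by rw [hφ']; simp
  have hnear_val : φ' (z, s(z, u)) = c2 := by
    rw [hφ']; simp [Prod.mk.injEq, hzu.ne]
  -- incidence characterization of H + e
  have hinc : ∀ w f, IsIncidence (H ⊔ SimpleGraph.fromEdgeSet {s(z, u)}) w f ↔
      IsIncidence H w f ∨ (f = s(z, u) ∧ (w = z ∨ w = u)) := by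
    intro w f
    have hdiag : ¬ (s(z, u) : Sym2 V).IsDiag := G.not_isDiag_of_mem_edgeSet he
    unfold IsIncidence
    rw [SimpleGraph.edgeSet_sup, SimpleGraph.edgeSet_fromEdgeSet]
    constructor
    · rintro ⟨hf | ⟨hf, -⟩, hwf⟩
      · exact Or.inl ⟨hf, hwf⟩
      · rw [Set.mem_singleton_iff] at hf
        subst hf
        exact Or.inr ⟨rfl, Sym2.mem_iff.mp hwf⟩
    · rintro (⟨hf, hwf⟩ | ⟨rfl, hw⟩)
      · exact ⟨Or.inl hf, hwf⟩
      · exact ⟨Or.inr ⟨rfl, hdiag⟩, Sym2.mem_iff.mpr hw⟩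
  -- forbidden color facts
  have hforb_far : ∀ w f, IsIncidence H w f → IncAdj u s(z, u) w f → φ (w, f) ≠ c1 := by
    intro w f h1 h2 heq
    exact hc1F (heq ▸ ⟨(w, f), ⟨h1, h2⟩, rfl⟩)
  have hforb_near : ∀ w f, IsIncidence H w f → IncAdj z s(z, u) w f → φ (w, f) ≠ c2 := by
    intro w f h1 h2 heq
    exact hc2F (Set.mem_insert_of_mem c1 (heq ▸ ⟨(w, f), ⟨h1, h2⟩, rfl⟩))
  refine ⟨φ', ⟨?_, ?_⟩, fun v f h => hold v f h.1⟩
  · -- colors come from lists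
    intro w f hwf
    rcases (hinc w f).mp hwf with hH | ⟨rfl, rfl | rfl⟩
    · rw [hold w f hH.1]; exact hφ.1 w f hH
    · rw [hnear_val]; exact hc2L
    · rw [hfar_val]; exact hc1L
  · -- properness
    intro w f w' f' h1 h2 hne' hadj
    rcases (hinc w f).mp h1 with hH1 | ⟨rfl, hw1⟩ <;>
      rcases (hinc w' f').mp h2 with hH2 | ⟨hf2, hw2⟩
    · rw [hold w f hH1.1, hold w' f' hH2.1]
      exact hφ.2 w f w' f' hH1 hH2 hne' hadj
    · subst hf2
      rw [hold w f hH1.1]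
      rcases hw2 with rfl | rfl
      · rw [hnear_val]; exact hforb_near w f hH1 hadj.symm'
      · rw [hfar_val]; exact hforb_far w f hH1 hadj.symm'
    · rw [hold w' f' hH2.1]
      rcases hw1 with rfl | rfl
      · rw [hnear_val]; exact fun h => hforb_near w' f' hH2 hadj h.symm
      · rw [hfar_val]; exact fun h => hforb_far w' f' hH2 hadj h.symm
    · subst hf2
      rcases hw1 with rfl | rfl <;> rcases hw2 with rfl | rfl
      · exact absurd rfl hne'
      · rw [hnear_val, hfar_val]; exact hc2c1
      · rw [hnear_val, hfar_val]; exact hc2c1.symm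
      · exact absurd rfl hne'
end

section
/- Let G be a subcubic simple graph, L an incidence 6-list assignment of G, and let v0, v1, v2 be three vertices with v0v1, v1v2 ∈ E(G) and v0v2 ∉ E(G). Suppose that for each i ∈ {0,1} there is an edge e_{v_i} = v_i u_i incident to v_i such that e_{v_0} and e_{v_1} do not share an endpoint and u_1 ≠ v_2. Then there exist colors α ∈ L(u_0, e_{v_0}), β ∈ L(v_0, e_{v_0}), γ ∈ L(u_1, e_{v_1}), δ ∈ L(v_1, e_{v_1}), and η ∈ L(v_2, v_1v_2), with α ≠ β, δ ≠ γ, and δ ≠ η, satisfying |L(v_0, v_0v_1) ∩ {α, δ}| ≤ 1 and |L(v_1, v_0v_1) ∩ {β, γ, η}| ≤ 1. -/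
lemma inter_pair_le_one (X : Finset ℕ) (a d w : ℕ)
    (ha : a ∈ X → a = w) (hd : d ∈ X → d = w) :
    (X ∩ ({a, d} : Finset ℕ)).card ≤ 1 := by
  have hsub : X ∩ ({a, d} : Finset ℕ) ⊆ {w} := by
    intro x hx
    simp only [Finset.mem_inter, Finset.mem_insert, Finset.mem_singleton] at hx ⊢
    rcases hx with ⟨hxX, rfl | rfl⟩
    exacts [ha hxX, hd hxX]
  simpa using Finset.card_le_card hsub

lemma inter_triple_le_one (Y : Finset ℕ) (b c e w : ℕ)
    (hb : b ∈ Y → b = w) (hc : c ∈ Y → c = w) (he : e ∈ Y → e = w) :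
    (Y ∩ ({b, c, e} : Finset ℕ)).card ≤ 1 := by
  have hsub : Y ∩ ({b, c, e} : Finset ℕ) ⊆ {w} := by
    intro x hx
    simp only [Finset.mem_inter, Finset.mem_insert, Finset.mem_singleton] at hx ⊢
    rcases hx with ⟨hxY, rfl | rfl | rfl⟩
    exacts [hb hxY, hc hxY, he hxY]
  simpa using Finset.card_le_card hsub


lemma inter_card_ge (Y S T : Finset ℕ) (hY : Y.card ≤ 6) (hS : S ⊆ Y) (hT : T ⊆ Y) :
    S.card + T.card - 6 ≤ (S ∩ T).card := by
  have h := Finset.card_inter_add_card_union S T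
  have hU : (S ∪ T).card ≤ 6 :=
    le_trans (Finset.card_le_card (Finset.union_subset hS hT)) hY
  omega

lemma inner_choice (Y B C E : Finset ℕ) (hY : Y.card = 6) (hB : B.card = 6)
    (hC : C.card = 6) (hE : E.card = 6) (a d : ℕ) :
    ∃ b ∈ B, ∃ c ∈ C, ∃ e ∈ E, b ≠ a ∧ c ≠ d ∧ e ≠ d ∧
      ∀ x ∈ Y, (x = b ∨ x = c ∨ x = e) → ∀ y ∈ Y, (y = b ∨ y = c ∨ y = e) → x = y := by
  classical
  set B' := B \ {a} with hB'def
  set C' := C \ {d} with hC'def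
  set E' := E \ {d} with hE'def
  have hB' : 5 ≤ B'.card := by
    rw [hB'def]
    have := Finset.le_card_sdiff ({a} : Finset ℕ) B
    simp only [Finset.card_singleton, hB] at this
    omega
  have hC' : 5 ≤ C'.card := by
    rw [hC'def]
    have := Finset.le_card_sdiff ({d} : Finset ℕ) C
    simp only [Finset.card_singleton, hC] at this
    omega
  have hE' : 5 ≤ E'.card := by
    rw [hE'def]
    have := Finset.le_card_sdiff ({d} : Finset ℕ) E
    simp only [Finset.card_singleton, hE] at this
    omega
  have memB' : ∀ x ∈ B', x ∈ B ∧ x ≠ a := by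
    intro x hx; simpa [hB'def, Finset.mem_sdiff] using hx
  have memC' : ∀ x ∈ C', x ∈ C ∧ x ≠ d := by
    intro x hx; simpa [hC'def, Finset.mem_sdiff] using hx
  have memE' : ∀ x ∈ E', x ∈ E ∧ x ≠ d := by
    intro x hx; simpa [hE'def, Finset.mem_sdiff] using hx
  have hB'ne : B'.Nonempty := Finset.card_pos.mp (by omega)
  have hC'ne : C'.Nonempty := Finset.card_pos.mp (by omega)
  have hE'ne : E'.Nonempty := Finset.card_pos.mp (by omega)
  by_cases hb : ∃ b ∈ B', b ∉ Y
  · obtain ⟨b, hbB', hbY⟩ := hb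
    obtain ⟨hbB, hba⟩ := memB' b hbB'
    by_cases hc : ∃ c ∈ C', c ∉ Y
    · obtain ⟨c, hcC', hcY⟩ := hc
      obtain ⟨hcC, hcd⟩ := memC' c hcC'
      obtain ⟨e, heE'⟩ := hE'ne
      obtain ⟨heE, hed⟩ := memE' e heE'
      refine ⟨b, hbB, c, hcC, e, heE, hba, hcd, hed, ?_⟩
      rintro x hxY hx y hyY hy
      rcases hx with rfl | rfl | rfl
      · exact absurd hxY hbY
      · exact absurd hxY hcY
      · rcases hy with rfl | rfl | rfl
        · exact absurd hyY hbY
        · exact absurd hyY hcY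
        · rfl
    · push_neg at hc
      by_cases he : ∃ e ∈ E', e ∉ Y
      · obtain ⟨e, heE', heY⟩ := he
        obtain ⟨heE, hed⟩ := memE' e heE'
        obtain ⟨c, hcC'⟩ := hC'ne
        obtain ⟨hcC, hcd⟩ := memC' c hcC'
        refine ⟨b, hbB, c, hcC, e, heE, hba, hcd, hed, ?_⟩
        rintro x hxY hx y hyY hy
        rcases hx with rfl | rfl | rfl
        · exact absurd hxY hbY
        case _ => rcases hy with rfl | rfl | rfl
                  · exact absurd hyY hbY
                  · rfl
                  · exact absurd hyY heY
        · exact absurd hxY heY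
      · push_neg at he
        have hCY : C' ⊆ Y := fun x hx => (hc x hx)
        have hEY : E' ⊆ Y := fun x hx => (he x hx)
        have : (C' ∩ E').Nonempty := by
          rw [← Finset.card_pos]
          have := inter_card_ge Y C' E' (le_of_eq hY) hCY hEY
          omega
        obtain ⟨c, hce⟩ := this
        rw [Finset.mem_inter] at hce
        obtain ⟨hcC, hcd⟩ := memC' c hce.1
        obtain ⟨hcE, _⟩ := memE' c hce.2
        refine ⟨b, hbB, c, hcC, c, hcE, hba, hcd, hcd, ?_⟩
        rintro x hxY hx y hyY hy
        rcases hx with rfl | rfl | rfl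
        · exact absurd hxY hbY
        all_goals rcases hy with rfl | rfl | rfl
        · exact absurd hyY hbY
        · rfl
        · rfl
        · exact absurd hyY hbY
        · rfl
        · rfl
  · push_neg at hb
    have hBY : B' ⊆ Y := fun x hx => (hb x hx)
    by_cases hc : ∃ c ∈ C', c ∉ Y
    · obtain ⟨c, hcC', hcY⟩ := hc
      obtain ⟨hcC, hcd⟩ := memC' c hcC'
      by_cases he : ∃ e ∈ E', e ∉ Y
      · obtain ⟨e, heE', heY⟩ := he
        obtain ⟨heE, hed⟩ := memE' e heE'
        obtain ⟨b, hbB'⟩ := hB'ne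
        obtain ⟨hbB, hba⟩ := memB' b hbB'
        refine ⟨b, hbB, c, hcC, e, heE, hba, hcd, hed, ?_⟩
        rintro x hxY hx y hyY hy
        rcases hx with rfl | rfl | rfl
        case _ => rcases hy with rfl | rfl | rfl
                  · rfl
                  · exact absurd hyY hcY
                  · exact absurd hyY heY
        · exact absurd hxY hcY
        · exact absurd hxY heY
      · push_neg at he
        have hEY : E' ⊆ Y := fun x hx => (he x hx)
        have : (B' ∩ E').Nonempty := by
          rw [← Finset.card_pos]
          have := inter_card_ge Y B' E' (le_of_eq hY) hBY hEY
          omega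
        obtain ⟨b, hbe⟩ := this
        rw [Finset.mem_inter] at hbe
        obtain ⟨hbB, hba⟩ := memB' b hbe.1
        obtain ⟨hbE, hbd⟩ := memE' b hbe.2
        refine ⟨b, hbB, c, hcC, b, hbE, hba, hcd, hbd, ?_⟩
        rintro x hxY hx y hyY hy
        rcases hx with rfl | rfl | rfl
        all_goals first
          | exact absurd hxY hcY
          | (rcases hy with rfl | rfl | rfl
             · rfl
             · exact absurd hyY hcY
             · rfl)
    · push_neg at hc
      have hCY : C' ⊆ Y := fun x hx => (hc x hx)
      have hbc : (B' ∩ C').Nonempty := by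
        rw [← Finset.card_pos]
        have := inter_card_ge Y B' C' (le_of_eq hY) hBY hCY
        omega
      by_cases he : ∃ e ∈ E', e ∉ Y
      · obtain ⟨e, heE', heY⟩ := he
        obtain ⟨heE, hed⟩ := memE' e heE'
        obtain ⟨b, hb2⟩ := hbc
        rw [Finset.mem_inter] at hb2
        obtain ⟨hbB, hba⟩ := memB' b hb2.1
        obtain ⟨hbC, hbd⟩ := memC' b hb2.2
        refine ⟨b, hbB, b, hbC, e, heE, hba, hbd, hed, ?_⟩
        rintro x hxY hx y hyY hy
        rcases hx with rfl | rfl | rfl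
        all_goals first
          | exact absurd hxY heY
          | (rcases hy with rfl | rfl | rfl
             · rfl
             · rfl
             · exact absurd hyY heY)
      · push_neg at he
        have hEY : E' ⊆ Y := fun x hx => (he x hx)
        have : (B' ∩ C' ∩ E').Nonempty := by
          rw [← Finset.card_pos]
          have h1 := inter_card_ge Y B' C' (le_of_eq hY) hBY hCY
          have h2 := inter_card_ge Y (B' ∩ C') E' (le_of_eq hY)
            (le_trans (Finset.inter_subset_left) hBY) hEY
          omega
        obtain ⟨b, hb3⟩ := this
        rw [Finset.mem_inter, Finset.mem_inter] at hb3
        obtain ⟨⟨hb1, hb2⟩, hb4⟩ := hb3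
        obtain ⟨hbB, hba⟩ := memB' b hb1
        obtain ⟨hbC, hbd⟩ := memC' b hb2
        obtain ⟨hbE, _⟩ := memE' b hb4
        refine ⟨b, hbB, b, hbC, b, hbE, hba, hbd, hbd, ?_⟩
        rintro x hxY hx y hyY hy
        rcases hx with rfl | rfl | rfl <;> rcases hy with rfl | rfl | rfl <;> rfl



/-- Lemma on choosing colors (Claim 3 of Benmedjdoub et al.): given a subcubic graph `G`, an
incidence 6-list assignment `L`, a path `v₀v₁v₂` with `v₀v₂ ∉ E(G)`, and edges
`e_{v₀} = v₀u₀`, `e_{v₁} = v₁u₁` sharing no endpoint with `u₁ ≠ v₂`, one can pick colors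
`α ∈ L(u₀, e_{v₀})`, `β ∈ L(v₀, e_{v₀})`, `γ ∈ L(u₁, e_{v₁})`, `δ ∈ L(v₁, e_{v₁})`,
`η ∈ L(v₂, v₁v₂)` with `α ≠ β`, `δ ≠ γ`, `δ ≠ η`, such that
`|L(v₀, v₀v₁) ∩ {α, δ}| ≤ 1` and `|L(v₁, v₀v₁) ∩ {β, γ, η}| ≤ 1`. -/
theorem choose_colors_for_two_edges {V : Type*} [Fintype V] (G : SimpleGraph V)
    (hsub : ∀ v, vdeg G v ≤ 3)
    (L : V × Sym2 V → Finset ℕ)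
    (hL : ∀ v e, IsIncidence G v e → (L (v, e)).card = 6)
    (v₀ v₁ v₂ u₀ u₁ : V)
    (h01 : G.Adj v₀ v₁) (h12 : G.Adj v₁ v₂) (h02 : ¬ G.Adj v₀ v₂)
    (he0 : G.Adj v₀ u₀) (he1 : G.Adj v₁ u₁)
    (hdisj : ∀ x, x ∈ s(v₀, u₀) → x ∉ s(v₁, u₁))
    (hu1v2 : u₁ ≠ v₂) :
    ∃ α ∈ L (u₀, s(v₀, u₀)), ∃ β ∈ L (v₀, s(v₀, u₀)),
    ∃ γ ∈ L (u₁, s(v₁, u₁)), ∃ δ ∈ L (v₁, s(v₁, u₁)),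
    ∃ η ∈ L (v₂, s(v₁, v₂)),
      α ≠ β ∧ δ ≠ γ ∧ δ ≠ η ∧
      (L (v₀, s(v₀, v₁)) ∩ ({α, δ} : Finset ℕ)).card ≤ 1 ∧
      (L (v₁, s(v₀, v₁)) ∩ ({β, γ, η} : Finset ℕ)).card ≤ 1 := by
  classical
  have iA : IsIncidence G u₀ s(v₀, u₀) := ⟨by simpa using he0, by simp⟩
  have iB : IsIncidence G v₀ s(v₀, u₀) := ⟨by simpa using he0, by simp⟩
  have iC : IsIncidence G u₁ s(v₁, u₁) := ⟨by simpa using he1, by simp⟩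
  have iD : IsIncidence G v₁ s(v₁, u₁) := ⟨by simpa using he1, by simp⟩
  have iE : IsIncidence G v₂ s(v₁, v₂) := ⟨by simpa using h12, by simp⟩
  have iX : IsIncidence G v₀ s(v₀, v₁) := ⟨by simpa using h01, by simp⟩
  have iY : IsIncidence G v₁ s(v₀, v₁) := ⟨by simpa using h01, by simp⟩
  set A := L (u₀, s(v₀, u₀)) with hAdef
  set B := L (v₀, s(v₀, u₀)) with hBdef
  set C := L (u₁, s(v₁, u₁)) with hCdef
  set D := L (v₁, s(v₁, u₁)) with hDdef
  set E := L (v₂, s(v₁, v₂)) with hEdef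
  set X := L (v₀, s(v₀, v₁)) with hXdef
  set Y := L (v₁, s(v₀, v₁)) with hYdef
  have hA : A.card = 6 := hL _ _ iA
  have hB : B.card = 6 := hL _ _ iB
  have hC : C.card = 6 := hL _ _ iC
  have hD : D.card = 6 := hL _ _ iD
  have hE : E.card = 6 := hL _ _ iE
  have hX : X.card = 6 := hL _ _ iX
  have hY : Y.card = 6 := hL _ _ iY
  -- first choose α ∈ A and δ ∈ D handling the X-condition
  have key : ∃ a ∈ A, ∃ d ∈ D, (X ∩ ({a, d} : Finset ℕ)).card ≤ 1 := by
    by_cases hd : ∃ d ∈ D, d ∉ X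
    · obtain ⟨d, hdD, hdX⟩ := hd
      obtain ⟨a, haA⟩ := Finset.card_pos.mp (by omega : 0 < A.card)
      exact ⟨a, haA, d, hdD,
        inter_pair_le_one X a d a (fun _ => rfl) (fun h => absurd h hdX)⟩
    · push_neg at hd
      by_cases ha : ∃ a ∈ A, a ∉ X
      · obtain ⟨a, haA, haX⟩ := ha
        obtain ⟨d, hdD⟩ := Finset.card_pos.mp (by omega : 0 < D.card)
        exact ⟨a, haA, d, hdD,
          inter_pair_le_one X a d d (fun h => absurd h haX) (fun _ => rfl)⟩
      · push_neg at ha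
        have hAX : A ⊆ X := fun x hx => ha x hx
        have hDX : D ⊆ X := fun x hx => hd x hx
        have : (A ∩ D).Nonempty := by
          rw [← Finset.card_pos]
          have := inter_card_ge X A D (le_of_eq hX) hAX hDX
          omega
        obtain ⟨a, had⟩ := this
        rw [Finset.mem_inter] at had
        exact ⟨a, had.1, a, had.2,
          inter_pair_le_one X a a a (fun _ => rfl) (fun _ => rfl)⟩
  obtain ⟨a, haA, d, hdD, hXcond⟩ := key
  obtain ⟨b, hbB, c, hcC, e, heE, hba, hcd, hed, hYall⟩ :=
    inner_choice Y B C E hY hB hC hE a d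
  refine ⟨a, haA, b, hbB, c, hcC, d, hdD, e, heE, hba.symm, hcd.symm, hed.symm, hXcond, ?_⟩
  rw [Finset.card_le_one]
  intro x hx y hy
  simp only [Finset.mem_inter, Finset.mem_insert, Finset.mem_singleton] at hx hy
  exact hYall x hx.1 hx.2 y hy.1 hy.2
end
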